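/- arXiv:2306.06342 — 2 statements merged into one kernel-verified Lean document; each statement's English description precedes it below -/
import Mathlib

section
/- Coverage of Repeated Subsampling, lower bound: Suppose (Z̃_1,…,Z̃_{K+1}) satisfies hierarchical exchangeability, a measurable score function s is fitted on training groups Z̃_1,…,Z̃_{K₀}, and the Repeated Subsampling prediction set is Ĉ(x) = {y : s(x,y) ≤ T} with T = Q_{1−α}( Σ_{b=1}^{B} Σ_{k=K₀+1}^{K} (1/(B(K₁+1))) δ_{s(Z_{k,i_k^{(b)}})} + (1/(K₁+1)) δ_{+∞} ), where for each calibration group k the indices i_k^{(1)},…,i_k^{(B)} are sampled uniformly with replacement from {1,…,N_k}, independently across groups and independently of the data given group sizes, and K₁ = K − K₀. Then, with test point (X_test, Y_test) = Z_{K+1,1}, P(Y_test ∈ Ĉ(X_test)) ≥ 1 − α. -/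
/-!
Give the test group its own `B` uniform subsampling variables, so that each held-out group
(every calibration group and the test group) contributes `B` subsampled scores. Exchanging a
calibration group with the test group, together with the matching rows of the uniform array, or
permuting the `B` columns, preserves the joint law of all `B (K₁ + 1)` scores; hence each of them
lies below the `(1 - α)`-quantile `Q` of their empirical distribution with the same probability,
and since a `(1 - α)`-fraction of them always does, that probability is at least `1 - α`.
Replacing the test group's scores by `+∞` can only raise `Q` to the threshold `T` of the
prediction set. Finally, exchangeability within the test group given its size allows the
subsampled test observation `Z_{K+1, ⌊U N_{K+1}⌋}` to be replaced by `Z_{K+1, 1}`.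
-/

open MeasureTheory ProbabilityTheory
open scoped ENNReal

noncomputable section

/-- Extend a permutation of `Fin m` to `ℕ` by the identity outside `{0, …, m-1}`. -/
def permExt {m : ℕ} (σ : Equiv.Perm (Fin m)) : ℕ → ℕ :=
  fun i => if h : i < m then (σ ⟨i, h⟩ : ℕ) else i

/-- The representation of the groups `0, …, L-1` of a hierarchical data set:
group `k` is recorded as the pair of its size `N k ω` and its sequence of observations. -/
def hierData {Ω 𝒵 : Type*} (L : ℕ) (N : ℕ → Ω → ℕ) (Z : ℕ → ℕ → Ω → 𝒵) :
    Ω → Fin L → ℕ × (ℕ → 𝒵) :=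
  fun ω k => (N k.1 ω, fun i => Z k.1 i ω)

/-- Hierarchical exchangeability (Definition 1.1) of the groups `0, …, L-1`:
(i) the groups are exchangeable with each other, and (ii) for each `k` and each `m`
with `P(N_k = m) > 0`, conditionally on `N_k = m` the first `m` observations within
group `k` are exchangeable. -/
def HierExch {Ω 𝒵 : Type*} [MeasurableSpace Ω] [MeasurableSpace 𝒵] (L : ℕ)
    (P : Measure Ω) (N : ℕ → Ω → ℕ) (Z : ℕ → ℕ → Ω → 𝒵) : Prop :=
  (∀ σ : Equiv.Perm (Fin L),
      Measure.map (fun ω => fun k : Fin L => hierData L N Z ω (σ k)) P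
        = Measure.map (hierData L N Z) P) ∧
  (∀ k, k < L → ∀ m : ℕ, 0 < P {ω | N k ω = m} → ∀ σ : Equiv.Perm (Fin m),
      Measure.map
          (hierData L N fun k' i => if k' = k then Z k' (permExt σ i) else Z k' i)
          (ProbabilityTheory.cond P {ω | N k ω = m})
        = Measure.map (hierData L N Z) (ProbabilityTheory.cond P {ω | N k ω = m}))

/-- The `(1-β)`-quantile `Q_{1-β}(μ) = inf {t : μ((-∞, t]) ≥ 1-β}` of a distribution `μ`
on the extended real line. -/
def erealQuantile (β : ℝ) (μ : Measure EReal) : EReal :=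
  sInf {t : EReal | ENNReal.ofReal β ≤ μ (Set.Iic t)}

open Set Function

lemma MeasureTheory.measurePreserving_comp_of_injective {ι ι' X : Type*} [Fintype ι] [Fintype ι']
    [MeasurableSpace X] (κ : Measure X) [IsProbabilityMeasure κ] {f : ι' → ι}
    (hf : Injective f) :
    MeasurePreserving (fun u : ι → X => u ∘ f)
      (Measure.pi fun _ => κ) (Measure.pi fun _ => κ) := by
  refine ⟨by fun_prop, ?_⟩
  have hind := (iIndepFun_pi (μ := fun _ : ι => κ) (X := fun _ => id)
    fun _ => aemeasurable_id).precomp hf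
  refine (hind.map_fun_eq_pi_map fun j => (measurable_pi_apply (f j)).aemeasurable).trans ?_
  exact congrArg Measure.pi (funext fun j => (measurePreserving_eval _ (f j)).map_eq)

section Quantile

variable {μ μ' : Measure EReal} {β : ℝ}

lemma le_measure_Iic_erealQuantile [IsFiniteMeasure μ] (hβ : ENNReal.ofReal β ≤ μ univ) :
    ENNReal.ofReal β ≤ μ (Iic (erealQuantile β μ)) := by
  set S := {t : EReal | ENNReal.ofReal β ≤ μ (Iic t)}
  have hS : S.Nonempty := ⟨⊤, by simpa [S] using hβ⟩
  obtain ⟨u, hu_anti, hu_lim, hu_mem⟩ := exists_seq_tendsto_sInf hS (OrderBot.bddBelow S)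
  have hIic : Iic (sInf S) = ⋂ n, Iic (u n) := by
    ext x
    simp only [mem_Iic, mem_iInter]
    exact ⟨fun hx n => hx.trans (csInf_le (OrderBot.bddBelow S) (hu_mem n)),
      fun hx => ge_of_tendsto hu_lim (Filter.Eventually.of_forall hx)⟩
  have hlim := tendsto_measure_iInter_atTop (μ := μ)
    (fun n => measurableSet_Iic.nullMeasurableSet)
    (fun m n hmn => Iic_subset_Iic.2 (hu_anti hmn)) ⟨0, measure_ne_top μ _⟩
  rw [erealQuantile, hIic]
  exact ge_of_tendsto hlim (Filter.Eventually.of_forall hu_mem)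

lemma erealQuantile_le_iff [IsFiniteMeasure μ] (hβ : ENNReal.ofReal β ≤ μ univ) {t : EReal} :
    erealQuantile β μ ≤ t ↔ ENNReal.ofReal β ≤ μ (Iic t) :=
  ⟨fun h => (le_measure_Iic_erealQuantile hβ).trans (measure_mono (Iic_subset_Iic.2 h)),
    fun h => csInf_le (OrderBot.bddBelow _) h⟩

lemma erealQuantile_anti (h : ∀ t, μ (Iic t) ≤ μ' (Iic t)) :
    erealQuantile β μ' ≤ erealQuantile β μ :=
  sInf_le_sInf fun _ ht => ht.trans (h _)

end Quantile

section Empirical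

variable {ι : Type*} [Fintype ι] {β : ℝ}

def empiricalMeasure (x : ι → EReal) : Measure EReal :=
  (Fintype.card ι : ℝ≥0∞)⁻¹ • ∑ i, Measure.dirac (x i)

lemma empiricalMeasure_apply (x : ι → EReal) {s : Set EReal} (hs : MeasurableSet s) :
    empiricalMeasure x s = (Fintype.card ι : ℝ≥0∞)⁻¹ * ∑ i, s.indicator 1 (x i) := by
  simp [empiricalMeasure, Measure.dirac_apply' _ hs]

instance [Nonempty ι] (x : ι → EReal) : IsProbabilityMeasure (empiricalMeasure x) := by
  constructor
  rw [empiricalMeasure_apply x MeasurableSet.univ]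
  simp [ENNReal.inv_mul_cancel]

lemma empiricalMeasure_comp_equiv (x : ι → EReal) (e : ι ≃ ι) :
    empiricalMeasure (x ∘ e) = empiricalMeasure x := by
  simp only [empiricalMeasure, comp_apply, e.sum_comp fun i => Measure.dirac (x i)]

lemma empiricalMeasure_Iic_anti {x y : ι → EReal} (h : ∀ i, x i ≤ y i) (t : EReal) :
    empiricalMeasure y (Iic t) ≤ empiricalMeasure x (Iic t) := by
  simp only [empiricalMeasure_apply _ measurableSet_Iic]
  gcongr with i
  by_cases hy : y i ≤ t
  · simp [hy, (h i).trans hy]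
  · simp [hy]

lemma erealQuantile_empiricalMeasure_mono {x y : ι → EReal} (h : ∀ i, x i ≤ y i) :
    erealQuantile β (empiricalMeasure x) ≤ erealQuantile β (empiricalMeasure y) :=
  erealQuantile_anti (empiricalMeasure_Iic_anti h)

lemma measurable_erealQuantile_empiricalMeasure [Nonempty ι] {Ω : Type*} [MeasurableSpace Ω]
    {x : Ω → ι → EReal} (hx : Measurable x) (hβ : β ≤ 1) :
    Measurable fun ω => erealQuantile β (empiricalMeasure (x ω)) := by
  refine measurable_of_Iic fun t => ?_
  have hpre : (fun ω => erealQuantile β (empiricalMeasure (x ω))) ⁻¹' Iic t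
      = {ω | ENNReal.ofReal β ≤ empiricalMeasure (x ω) (Iic t)} := by
    ext ω
    simp [erealQuantile_le_iff (μ := empiricalMeasure (x ω)) (by simpa using hβ)]
  rw [hpre]
  refine measurableSet_le measurable_const ?_
  simp only [empiricalMeasure_apply _ measurableSet_Iic]
  exact (Finset.measurable_sum _ fun i _ => (measurable_const.indicator measurableSet_Iic).comp
    ((measurable_pi_apply i).comp hx)).const_mul _

theorem ofReal_le_measure_le_erealQuantile_empiricalMeasure [Nonempty ι]
    (μ : Measure (ι → EReal)) [IsProbabilityMeasure μ] (hβ : β ≤ 1)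
    (hμ : ∀ i j, ∃ e : Equiv.Perm ι, e j = i ∧ μ.map (· ∘ e) = μ) (i : ι) :
    ENNReal.ofReal β ≤ μ {x | x i ≤ erealQuantile β (empiricalMeasure x)} := by
  set E : ι → Set (ι → EReal) := fun j => {x | x j ≤ erealQuantile β (empiricalMeasure x)}
  have hE : ∀ j, MeasurableSet (E j) := fun j => measurableSet_le (measurable_pi_apply j)
    (measurable_erealQuantile_empiricalMeasure measurable_id hβ)
  have hE_eq : ∀ j, μ (E j) = μ (E i) := by
    intro j
    obtain ⟨e, hej, hμe⟩ := hμ i j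
    have hpre : (· ∘ e) ⁻¹' E j = E i := by
      ext x
      simp [E, hej, empiricalMeasure_comp_equiv]
    rw [← hpre, ← Measure.map_apply (by fun_prop) (hE j), hμe]
  have hfraction (x : ι → EReal) :
      ENNReal.ofReal β ≤ (Fintype.card ι : ℝ≥0∞)⁻¹ * ∑ j, (E j).indicator 1 x := by
    have hatt := le_measure_Iic_erealQuantile (μ := empiricalMeasure x) (by simpa using hβ)
    rw [empiricalMeasure_apply _ measurableSet_Iic] at hatt
    simpa [E, indicator_apply] using hatt
  calc ENNReal.ofReal β = ∫⁻ _, ENNReal.ofReal β ∂μ := by simp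
    _ ≤ ∫⁻ x, (Fintype.card ι : ℝ≥0∞)⁻¹ * ∑ j, (E j).indicator 1 x ∂μ := lintegral_mono hfraction
    _ = (Fintype.card ι : ℝ≥0∞)⁻¹ * ∑ j, μ (E j) := by
      rw [lintegral_const_mul _ (Finset.measurable_sum _ fun j _ =>
        measurable_one.indicator (hE j)), lintegral_finsetSum _ fun j _ =>
        measurable_one.indicator (hE j)]
      simp [lintegral_indicator_one (hE _)]
    _ = μ (E i) := by simp [hE_eq, ← mul_assoc, ENNReal.inv_mul_cancel]

end Empirical

lemma MeasureTheory.Measure.map_restrict_eq_of_map_cond_eq {Ω X : Type*} [MeasurableSpace Ω]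
    [MeasurableSpace X] {μ : Measure Ω} [IsFiniteMeasure μ] {s : Set Ω} {f g : Ω → X}
    (h : 0 < μ s → (μ[|s]).map f = (μ[|s]).map g) :
    (μ.restrict s).map f = (μ.restrict s).map g := by
  rcases eq_zero_or_pos (μ s) with hs | hs
  · simp [Measure.restrict_eq_zero.2 hs]
  · have hrestrict : μ.restrict s = μ s • μ[|s] := by
      rw [ProbabilityTheory.cond, smul_smul, ENNReal.mul_inv_cancel hs.ne' (measure_ne_top _ _),
        one_smul]
    rw [hrestrict, Measure.map_smul, Measure.map_smul, h hs]

lemma Nat.floor_mul_lt_of_mem_Ico {x : ℝ} (hx : x ∈ Ico (0 : ℝ) 1) {n : ℕ} (hn : 0 < n) :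
    ⌊x * n⌋₊ < n := by
  rw [Nat.floor_lt (mul_nonneg hx.1 (Nat.cast_nonneg _))]
  exact mul_lt_of_lt_one_left (by exact_mod_cast hn) hx.2

section Hierarchical

variable {𝒵 : Type*}

def subsample (g : ℕ × (ℕ → 𝒵)) (x : ℝ) : 𝒵 := g.2 ⌊x * g.1⌋₊

@[fun_prop]
lemma Measurable.subsample [MeasurableSpace 𝒵] {Ω : Type*} [MeasurableSpace Ω]
    {g : Ω → ℕ × (ℕ → 𝒵)} {x : Ω → ℝ} (hg : Measurable g) (hx : Measurable x) :
    Measurable fun ω => subsample (g ω) (x ω) := by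
  have heval : Measurable fun q : (ℕ → 𝒵) × ℕ => q.1 q.2 :=
    measurable_from_prod_countable_left fun i => measurable_pi_apply i
  exact heval.comp (hg.snd.prodMk
    (Nat.measurable_floor.comp (hx.mul (measurable_from_nat.comp hg.fst))))

variable {L m : ℕ}

def permWithin (k : Fin L) (σ : Equiv.Perm (Fin m)) (d : Fin L → ℕ × (ℕ → 𝒵)) :
    Fin L → ℕ × (ℕ → 𝒵) :=
  update d k ((d k).1, (d k).2 ∘ permExt σ)

lemma measurable_permWithin [MeasurableSpace 𝒵] (k : Fin L) (σ : Equiv.Perm (Fin m)) :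
    Measurable (permWithin (𝒵 := 𝒵) k σ) :=
  measurable_update'.comp (measurable_id.prodMk ((measurable_pi_apply k).fst.prodMk
    (measurable_pi_lambda _ fun _ => (measurable_pi_apply _).comp (measurable_pi_apply k).snd)))

lemma measurableSet_groupSize_eq [MeasurableSpace 𝒵] (k : Fin L) (m : ℕ) :
    MeasurableSet {d : Fin L → ℕ × (ℕ → 𝒵) | (d k).1 = m} :=
  (measurable_pi_apply k).fst (measurableSet_singleton m)

lemma hierData_permExt_eq_permWithin {Ω : Type*} (N : ℕ → Ω → ℕ) (Z : ℕ → ℕ → Ω → 𝒵)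
    (k : Fin L) (σ : Equiv.Perm (Fin m)) :
    hierData L N (fun k' i => if k' = k then Z k' (permExt σ i) else Z k' i)
      = permWithin k σ ∘ hierData L N Z := by
  funext ω j
  by_cases hj : j = k
  · subst hj
    simp [hierData, permWithin]
    rfl
  · have hj' : (j : ℕ) ≠ k := fun h => hj (Fin.ext h)
    simp [hierData, permWithin, hj, hj']

lemma measurable_hierData [MeasurableSpace 𝒵] {Ω : Type*} [MeasurableSpace Ω] {N : ℕ → Ω → ℕ}
    {Z : ℕ → ℕ → Ω → 𝒵} (hN : ∀ k, Measurable (N k)) (hZ : ∀ k i, Measurable (Z k i)) :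
    Measurable (hierData L N Z) :=
  measurable_pi_lambda _ fun k => (hN k).prodMk (measurable_pi_lambda _ fun i => hZ k i)

variable [MeasurableSpace 𝒵]

lemma HierExch.map_comp_perm {Ω : Type*} [MeasurableSpace Ω] {P : Measure Ω}
    {N : ℕ → Ω → ℕ} {Z : ℕ → ℕ → Ω → 𝒵} (h : HierExch L P N Z)
    (hD : Measurable (hierData L N Z)) (σ : Equiv.Perm (Fin L)) :
    (P.map (hierData L N Z)).map (· ∘ σ) = P.map (hierData L N Z) := by
  rw [Measure.map_map (by fun_prop) hD]
  exact h.1 σ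

lemma HierExch.map_permWithin_restrict {Ω : Type*} [MeasurableSpace Ω] {P : Measure Ω}
    [IsFiniteMeasure P] {N : ℕ → Ω → ℕ} {Z : ℕ → ℕ → Ω → 𝒵} (h : HierExch L P N Z)
    (hD : Measurable (hierData L N Z)) (k : Fin L) (σ : Equiv.Perm (Fin m)) :
    ((P.map (hierData L N Z)).restrict {d | (d k).1 = m}).map (permWithin k σ)
      = (P.map (hierData L N Z)).restrict {d | (d k).1 = m} := by
  rw [Measure.restrict_map hD (measurableSet_groupSize_eq k m),
    Measure.map_map (measurable_permWithin k σ) hD, ← hierData_permExt_eq_permWithin]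
  exact Measure.map_restrict_eq_of_map_cond_eq (h.2 k k.2 m · σ)

lemma map_subsample_eq_map_zero {ν : Measure (Fin L → ℕ × (ℕ → 𝒵))} {k : Fin L}
    (hν : ∀ m (σ : Equiv.Perm (Fin m)),
      (ν.restrict {d | (d k).1 = m}).map (permWithin k σ) = ν.restrict {d | (d k).1 = m})
    (hν₀ : ν {d | (d k).1 = 0} = 0) {x : ℝ} (hx : x ∈ Ico (0 : ℝ) 1)
    {X : Type*} [MeasurableSpace X] {Φ : (Fin L → ℕ × (ℕ → 𝒵)) → X} (hΦ : Measurable Φ)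
    (hΦσ : ∀ m (σ : Equiv.Perm (Fin m)) d, Φ (permWithin k σ d) = Φ d) :
    ν.map (fun d => (Φ d, subsample (d k) x)) = ν.map (fun d => (Φ d, (d k).2 0)) := by
  set F : ℕ → Set (Fin L → ℕ × (ℕ → 𝒵)) := fun m => {d | (d k).1 = m}
  have hF : ∀ m, MeasurableSet (F m) := measurableSet_groupSize_eq k
  have hsum : ν = Measure.sum fun m => ν.restrict (F m) := by
    have hcover : ⋃ m, F m = univ := by ext; simp [F]
    rw [← Measure.restrict_iUnion (s := F)
      (pairwise_disjoint_fiber fun d : Fin L → ℕ × (ℕ → 𝒵) => (d k).1) hF, hcover,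
      Measure.restrict_univ]
  have hfx : Measurable fun d : Fin L → ℕ × (ℕ → 𝒵) => (Φ d, subsample (d k) x) :=
    hΦ.prodMk ((measurable_pi_apply k).subsample measurable_const)
  have hf0 : Measurable fun d : Fin L → ℕ × (ℕ → 𝒵) => (Φ d, (d k).2 0) :=
    hΦ.prodMk ((measurable_pi_apply 0).comp (measurable_pi_apply k).snd)
  rw [hsum, Measure.map_sum hfx.aemeasurable, Measure.map_sum hf0.aemeasurable]
  congr 1
  funext m
  rcases Nat.eq_zero_or_pos m with rfl | hm
  · simp [Measure.restrict_eq_zero.2 hν₀, F]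
  -- on the fibre `N_k = m`, transposing the observations `0` and `⌊x m⌋` of group `k`
  -- carries one map to the other
  set σ := Equiv.swap (⟨0, hm⟩ : Fin m) ⟨⌊x * m⌋₊, Nat.floor_mul_lt_of_mem_Ico hx hm⟩
  have hswap : ∀ d ∈ F m, (Φ (permWithin k σ d), subsample (permWithin k σ d k) x)
      = (Φ d, (d k).2 0) := by
    intro d hd
    simp only [F, mem_ofPred_eq] at hd
    rw [hΦσ]
    simp [permWithin, subsample, hd, permExt, Nat.floor_mul_lt_of_mem_Ico hx hm, σ]
  conv_lhs => rw [← hν m σ, Measure.map_map hfx (measurable_permWithin k σ)]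
  exact Measure.map_congr (ae_restrict_of_forall_mem (hF m) hswap)

end Hierarchical

local notation "𝕌" => Measure.restrict (volume : Measure ℝ) (Ico (0 : ℝ) 1)

instance : IsProbabilityMeasure 𝕌 := ⟨by simp⟩

namespace RepeatedSubsampling

variable {𝒵 : Type*} {K K₀ B : ℕ}

-- Group `K₀ + j`: a calibration group for `j < K - K₀`, the test group `K` for `j = Fin.last _`.
def calibIdx (hK₀ : K₀ ≤ K) (j : Fin (K - K₀ + 1)) : Fin (K + 1) := ⟨K₀ + j, by omega⟩

def trainGroups (hK₀ : K₀ ≤ K) (d : Fin (K + 1) → ℕ × (ℕ → 𝒵)) : Fin K₀ → ℕ × (ℕ → 𝒵) :=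
  d ∘ Fin.castLE (Nat.le_succ_of_le hK₀)

def score (hK₀ : K₀ ≤ K) (A : (Fin K₀ → ℕ × (ℕ → 𝒵)) → 𝒵 → ℝ)
    (d : Fin (K + 1) → ℕ × (ℕ → 𝒵)) (j : Fin (K - K₀ + 1)) (x : ℝ) : EReal :=
  A (trainGroups hK₀ d) (subsample (d (calibIdx hK₀ j)) x)

def scores (hK₀ : K₀ ≤ K) (A : (Fin K₀ → ℕ × (ℕ → 𝒵)) → 𝒵 → ℝ)
    (d : Fin (K + 1) → ℕ × (ℕ → 𝒵)) (w : Fin (K - K₀ + 1) × Fin B → ℝ) :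
    Fin (K - K₀ + 1) × Fin B → EReal :=
  fun p => score hK₀ A d p.1 (w p)

def calibScores (hK₀ : K₀ ≤ K) (A : (Fin K₀ → ℕ × (ℕ → 𝒵)) → 𝒵 → ℝ)
    (d : Fin (K + 1) → ℕ × (ℕ → 𝒵)) (u : Fin (K - K₀) × Fin B → ℝ) :
    Fin (K - K₀ + 1) × Fin B → EReal :=
  fun p => Fin.snoc (α := fun _ => EReal) (fun j => score hK₀ A d j.castSucc (u (j, p.2))) ⊤ p.1

def testScore (hK₀ : K₀ ≤ K) (A : (Fin K₀ → ℕ × (ℕ → 𝒵)) → 𝒵 → ℝ)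
    (d : Fin (K + 1) → ℕ × (ℕ → 𝒵)) : EReal :=
  A (trainGroups hK₀ d) ((d (Fin.last K)).2 0)

variable {hK₀ : K₀ ≤ K} {A : (Fin K₀ → ℕ × (ℕ → 𝒵)) → 𝒵 → ℝ}

lemma calibIdx_last : calibIdx hK₀ (Fin.last _) = Fin.last K := by
  ext
  simp [calibIdx]
  omega

lemma calibIdx_injective : Function.Injective (calibIdx hK₀) := fun j j' h => by
  ext
  simpa [calibIdx] using h

lemma calibIdx_castSucc_ne_last (j : Fin (K - K₀)) : calibIdx hK₀ j.castSucc ≠ Fin.last K := by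
  rw [← calibIdx_last]
  exact calibIdx_injective.ne (Fin.castSucc_lt_last j).ne

lemma castLE_ne_calibIdx (k : Fin K₀) (j : Fin (K - K₀ + 1)) :
    Fin.castLE (Nat.le_succ_of_le hK₀) k ≠ calibIdx hK₀ j := by
  intro h
  have := congrArg Fin.val h
  simp [calibIdx] at this
  omega

lemma scores_comp_swap (d : Fin (K + 1) → ℕ × (ℕ → 𝒵)) (w : Fin (K - K₀ + 1) × Fin B → ℝ)
    (j j' : Fin (K - K₀ + 1)) (π : Equiv.Perm (Fin B)) :
    scores hK₀ A (d ∘ Equiv.swap (calibIdx hK₀ j) (calibIdx hK₀ j'))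
        (w ∘ Equiv.prodCongr (Equiv.swap j j') π)
      = scores hK₀ A d w ∘ Equiv.prodCongr (Equiv.swap j j') π := by
  have htrain : trainGroups hK₀ (d ∘ Equiv.swap (calibIdx hK₀ j) (calibIdx hK₀ j'))
      = trainGroups hK₀ d := by
    funext k
    simp [trainGroups, Equiv.swap_apply_of_ne_of_ne (castLE_ne_calibIdx k j)
      (castLE_ne_calibIdx k j')]
  funext p
  simp [scores, score, htrain, calibIdx_injective.swap_apply]

lemma trainGroups_permWithin_last {m : ℕ} (σ : Equiv.Perm (Fin m))
    (d : Fin (K + 1) → ℕ × (ℕ → 𝒵)) :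
    trainGroups hK₀ (permWithin (Fin.last K) σ d) = trainGroups hK₀ d := by
  funext k
  refine update_of_ne ?_ _ _
  rw [← calibIdx_last (hK₀ := hK₀)]
  exact castLE_ne_calibIdx k _

lemma calibScores_permWithin_last {m : ℕ} (σ : Equiv.Perm (Fin m))
    (d : Fin (K + 1) → ℕ × (ℕ → 𝒵)) (u : Fin (K - K₀) × Fin B → ℝ) :
    calibScores hK₀ A (permWithin (Fin.last K) σ d) u = calibScores hK₀ A d u := by
  have hcalib (j : Fin (K - K₀)) :
      permWithin (Fin.last K) σ d (calibIdx hK₀ j.castSucc) = d (calibIdx hK₀ j.castSucc) :=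
    update_of_ne (calibIdx_castSucc_ne_last j) _ _
  funext p
  simp [calibScores, score, trainGroups_permWithin_last, hcalib]

lemma score_last (d : Fin (K + 1) → ℕ × (ℕ → 𝒵)) (x : ℝ) :
    score hK₀ A d (Fin.last _) x = A (trainGroups hK₀ d) (subsample (d (Fin.last K)) x) := by
  rw [score, calibIdx_last]

lemma scores_le_calibScores (d : Fin (K + 1) → ℕ × (ℕ → 𝒵))
    (w : Fin (K - K₀ + 1) × Fin B → ℝ) (p : Fin (K - K₀ + 1) × Fin B) :
    scores hK₀ A d w p ≤ calibScores hK₀ A d (w ∘ Prod.map Fin.castSucc id) p := by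
  obtain ⟨j, b⟩ := p
  induction j using Fin.lastCases with
  | last => simp [calibScores]
  | cast j => simp [scores, calibScores]

def threshold (β : ℝ) (hK₀ : K₀ ≤ K) (A : (Fin K₀ → ℕ × (ℕ → 𝒵)) → 𝒵 → ℝ)
    (d : Fin (K + 1) → ℕ × (ℕ → 𝒵)) (u : Fin (K - K₀) × Fin B → ℝ) : EReal :=
  erealQuantile β (empiricalMeasure (calibScores hK₀ A d u))

variable [MeasurableSpace 𝒵]

lemma measurable_trainGroups : Measurable (trainGroups (𝒵 := 𝒵) hK₀) :=
  measurable_pi_lambda _ fun _ => measurable_pi_apply _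

lemma measurable_score (hA : Measurable (uncurry A)) (j : Fin (K - K₀ + 1)) :
    Measurable fun q : (Fin (K + 1) → ℕ × (ℕ → 𝒵)) × ℝ => score hK₀ A q.1 j q.2 :=
  measurable_coe_real_ereal.comp (hA.comp
    (((measurable_trainGroups (hK₀ := hK₀)).comp measurable_fst).prodMk
      (((measurable_pi_apply _).comp measurable_fst).subsample measurable_snd)))

lemma measurable_scores (hA : Measurable (uncurry A)) :
    Measurable fun q : (Fin (K + 1) → ℕ × (ℕ → 𝒵)) × (Fin (K - K₀ + 1) × Fin B → ℝ) =>
      scores hK₀ A q.1 q.2 :=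
  measurable_pi_lambda _ fun p => (measurable_score hA p.1).comp
    (measurable_fst.prodMk ((measurable_pi_apply p).comp measurable_snd))

lemma measurable_threshold [NeZero B] (hA : Measurable (uncurry A)) {β : ℝ} (hβ : β ≤ 1)
    {Ω : Type*} [MeasurableSpace Ω] {d : Ω → Fin (K + 1) → ℕ × (ℕ → 𝒵)}
    {u : Ω → Fin (K - K₀) × Fin B → ℝ} (hd : Measurable d) (hu : Measurable u) :
    Measurable fun ω => threshold β hK₀ A (d ω) (u ω) := by
  refine measurable_erealQuantile_empiricalMeasure (measurable_pi_lambda _ fun p => ?_) hβ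
  obtain ⟨j, b⟩ := p
  induction j using Fin.lastCases with
  | last => simp [calibScores]
  | cast j =>
    simp only [calibScores, Fin.snoc_castSucc]
    exact (measurable_score hA j.castSucc).comp (hd.prodMk ((measurable_pi_apply (j, b)).comp hu))

lemma measurable_testScore (hA : Measurable (uncurry A)) :
    Measurable (testScore (𝒵 := 𝒵) hK₀ A) :=
  measurable_coe_real_ereal.comp (hA.comp ((measurable_trainGroups (hK₀ := hK₀)).prodMk
    ((measurable_pi_apply 0).comp (measurable_pi_apply _).snd)))

lemma measurableSet_testScore_le_threshold [NeZero B] (hA : Measurable (uncurry A)) {β : ℝ}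
    (hβ : β ≤ 1) :
    MeasurableSet {q : (Fin (K + 1) → ℕ × (ℕ → 𝒵)) × (Fin (K - K₀) × Fin B → ℝ) |
      testScore hK₀ A q.1 ≤ threshold β hK₀ A q.1 q.2} :=
  measurableSet_le ((measurable_testScore hA).comp measurable_fst)
    (measurable_threshold hA hβ measurable_fst measurable_snd)

lemma exists_perm_map_scores_eq {ν : Measure (Fin (K + 1) → ℕ × (ℕ → 𝒵))} [SFinite ν]
    (hν : ∀ σ : Equiv.Perm (Fin (K + 1)), ν.map (· ∘ σ) = ν) (hA : Measurable (uncurry A))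
    (i i' : Fin (K - K₀ + 1) × Fin B) :
    ∃ e : Equiv.Perm (Fin (K - K₀ + 1) × Fin B), e i' = i ∧
      ((ν.prod (Measure.pi fun _ : Fin (K - K₀ + 1) × Fin B => 𝕌)).map
          (fun q => scores hK₀ A q.1 q.2)).map (· ∘ e)
        = (ν.prod (Measure.pi fun _ : Fin (K - K₀ + 1) × Fin B => 𝕌)).map
          (fun q => scores hK₀ A q.1 q.2) := by
  set e := Equiv.prodCongr (Equiv.swap i.1 i'.1) (Equiv.swap i.2 i'.2)
  set σ := Equiv.swap (calibIdx hK₀ i.1) (calibIdx hK₀ i'.1)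
  refine ⟨e, Prod.ext (Equiv.swap_apply_right _ _) (Equiv.swap_apply_right _ _), ?_⟩
  have hT := (MeasurePreserving.mk (by fun_prop) (hν σ)).prod
    (measurePreserving_comp_of_injective 𝕌 e.injective)
  conv_rhs => rw [← hT.map_eq, Measure.map_map (measurable_scores hA) hT.measurable]
  rw [Measure.map_map (by fun_prop) (measurable_scores hA)]
  congr 1
  funext q
  exact (scores_comp_swap q.1 q.2 i.1 i'.1 (Equiv.swap i.2 i'.2)).symm

lemma measure_score_last_le_eq_measure_testScore_le [NeZero B]
    {ν : Measure (Fin (K + 1) → ℕ × (ℕ → 𝒵))} [SFinite ν]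
    (hν : ∀ m (σ : Equiv.Perm (Fin m)),
      (ν.restrict {d | (d (Fin.last K)).1 = m}).map (permWithin (Fin.last K) σ)
        = ν.restrict {d | (d (Fin.last K)).1 = m})
    (hν₀ : ν {d | (d (Fin.last K)).1 = 0} = 0) (hA : Measurable (uncurry A))
    {β : ℝ} (hβ : β ≤ 1) (b : Fin B) :
    (ν.prod (Measure.pi fun _ : Fin (K - K₀ + 1) × Fin B => 𝕌))
        {q | score hK₀ A q.1 (Fin.last _) (q.2 (Fin.last _, b))
          ≤ threshold β hK₀ A q.1 (q.2 ∘ Prod.map Fin.castSucc id)}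
      = (ν.prod (Measure.pi fun _ : Fin (K - K₀ + 1) × Fin B => 𝕌))
        {q | testScore hK₀ A q.1 ≤ threshold β hK₀ A q.1 (q.2 ∘ Prod.map Fin.castSucc id)} := by
  have hQ : Measurable fun q : (Fin (K + 1) → ℕ × (ℕ → 𝒵)) × (Fin (K - K₀ + 1) × Fin B → ℝ) =>
      threshold β hK₀ A q.1 (q.2 ∘ Prod.map Fin.castSucc id) :=
    measurable_threshold hA hβ measurable_fst
      (measurable_pi_lambda _ fun _ => (measurable_pi_apply _).comp measurable_snd)
  have hlast : Measurable fun q : (Fin (K + 1) → ℕ × (ℕ → 𝒵)) × (Fin (K - K₀ + 1) × Fin B → ℝ) =>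
      score hK₀ A q.1 (Fin.last _) (q.2 (Fin.last _, b)) :=
    (measurable_score hA (Fin.last _)).comp
      (measurable_fst.prodMk ((measurable_pi_apply (Fin.last _, b)).comp measurable_snd))
  have htest : Measurable fun q : (Fin (K + 1) → ℕ × (ℕ → 𝒵)) × (Fin (K - K₀ + 1) × Fin B → ℝ) =>
      testScore hK₀ A q.1 :=
    (measurable_testScore hA).comp measurable_fst
  rw [Measure.prod_apply_symm (measurableSet_le hlast hQ),
    Measure.prod_apply_symm (measurableSet_le htest hQ)]
  refine lintegral_congr_ae ?_
  filter_upwards [(measurePreserving_eval _ (Fin.last _, b)).quasiMeasurePreserving.ae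
    (ae_restrict_mem measurableSet_Ico)] with w hw
  set Φ := fun d : Fin (K + 1) → ℕ × (ℕ → 𝒵) =>
    (trainGroups hK₀ d, threshold β hK₀ A d (w ∘ Prod.map Fin.castSucc id))
  have hΦ : Measurable Φ := (measurable_trainGroups (hK₀ := hK₀)).prodMk
    (measurable_threshold hA hβ measurable_id measurable_const)
  have hΦσ (m : ℕ) (σ : Equiv.Perm (Fin m)) (d : Fin (K + 1) → ℕ × (ℕ → 𝒵)) :
      Φ (permWithin (Fin.last K) σ d) = Φ d := by
    simp [Φ, threshold, trainGroups_permWithin_last, calibScores_permWithin_last]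
  set E := {p : ((Fin K₀ → ℕ × (ℕ → 𝒵)) × EReal) × 𝒵 | (A p.1.1 p.2 : EReal) ≤ p.1.2}
  have hE : MeasurableSet E := measurableSet_le (measurable_coe_real_ereal.comp
    (hA.comp (measurable_fst.fst.prodMk measurable_snd))) measurable_fst.snd
  have hlaw := congrArg (· E) (map_subsample_eq_map_zero hν hν₀ hw hΦ hΦσ)
  rw [Measure.map_apply (by fun_prop) hE, Measure.map_apply (by fun_prop) hE] at hlaw
  simpa [E, score_last, testScore, Φ] using hlaw

theorem coverage_of_exchangeable [NeZero B] {ν : Measure (Fin (K + 1) → ℕ × (ℕ → 𝒵))}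
    [IsProbabilityMeasure ν] (hν_perm : ∀ σ : Equiv.Perm (Fin (K + 1)), ν.map (· ∘ σ) = ν)
    (hν_within : ∀ m (σ : Equiv.Perm (Fin m)),
      (ν.restrict {d | (d (Fin.last K)).1 = m}).map (permWithin (Fin.last K) σ)
        = ν.restrict {d | (d (Fin.last K)).1 = m})
    (hν₀ : ν {d | (d (Fin.last K)).1 = 0} = 0) (hA : Measurable (uncurry A))
    {β : ℝ} (hβ : β ≤ 1) :
    ENNReal.ofReal β ≤ (ν.prod (Measure.pi fun _ : Fin (K - K₀) × Fin B => 𝕌))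
      {q | testScore hK₀ A q.1 ≤ threshold β hK₀ A q.1 q.2} := by
  set ρ := ν.prod (Measure.pi fun _ : Fin (K - K₀ + 1) × Fin B => 𝕌)
  set i : Fin (K - K₀ + 1) × Fin B := (Fin.last _, 0)
  have := Measure.isProbabilityMeasure_map (μ := ρ)
    (measurable_scores (hK₀ := hK₀) hA).aemeasurable
  have hconf := ofReal_le_measure_le_erealQuantile_empiricalMeasure _ hβ
    (exists_perm_map_scores_eq hν_perm hA) i
  have hS : MeasurableSet {x : Fin (K - K₀ + 1) × Fin B → EReal |
      x i ≤ erealQuantile β (empiricalMeasure x)} :=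
    measurableSet_le (measurable_pi_apply i)
      (measurable_erealQuantile_empiricalMeasure measurable_id hβ)
  rw [Measure.map_apply (measurable_scores hA) hS] at hconf
  have hcast : Injective (Prod.map Fin.castSucc id : Fin (K - K₀) × Fin B → _) :=
    (Fin.castSucc_injective _).prodMap injective_id
  calc ENNReal.ofReal β ≤ _ := hconf
    _ ≤ ρ {q | score hK₀ A q.1 (Fin.last _) (q.2 i)
          ≤ threshold β hK₀ A q.1 (q.2 ∘ Prod.map Fin.castSucc id)} :=
      measure_mono fun q hq =>
        hq.trans (erealQuantile_empiricalMeasure_mono (scores_le_calibScores q.1 q.2))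
    _ = ρ {q | testScore hK₀ A q.1 ≤ threshold β hK₀ A q.1 (q.2 ∘ Prod.map Fin.castSucc id)} :=
      measure_score_last_le_eq_measure_testScore_le hν_within hν₀ hA hβ 0
    _ = _ := (MeasurePreserving.id ν |>.prod (measurePreserving_comp_of_injective 𝕌 hcast)
      ).measure_preimage (measurableSet_testScore_le_threshold hA hβ).nullMeasurableSet

end RepeatedSubsampling

-- The atom `(K - K₀ + 1)⁻¹ • δ_⊤` is the test group's row of `B` atoms `⊤`.
lemma sum_dirac_add_dirac_top_eq_empiricalMeasure {K K₀ B : ℕ} [NeZero B] (s : ℕ → ℕ → EReal) :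
    (∑ b ∈ Finset.range B, ∑ k ∈ Finset.Ico K₀ K,
        ((B : ℝ≥0∞) * ((K - K₀ + 1 : ℕ) : ℝ≥0∞))⁻¹ • Measure.dirac (s k b))
      + ((K - K₀ + 1 : ℕ) : ℝ≥0∞)⁻¹ • Measure.dirac ⊤
    = empiricalMeasure (fun p : Fin (K - K₀ + 1) × Fin B =>
        Fin.snoc (α := fun _ => EReal) (fun j : Fin (K - K₀) => s (K₀ + j) p.2) ⊤ p.1) := by
  have hB : (B : ℝ≥0∞) ≠ 0 := by exact_mod_cast NeZero.ne B
  have htop : ((B : ℝ≥0∞) * ((K - K₀ + 1 : ℕ) : ℝ≥0∞))⁻¹ * B = ((K - K₀ + 1 : ℕ) : ℝ≥0∞)⁻¹ := by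
    rw [ENNReal.mul_inv (by simp [hB]) (by simp), mul_comm, ← mul_assoc,
      ENNReal.mul_inv_cancel hB (by simp), one_mul]
  simp only [empiricalMeasure, Fintype.sum_prod_type, Fin.sum_univ_castSucc, Fin.snoc_castSucc,
    Fin.snoc_last, Finset.sum_const, Finset.card_univ, Fintype.card_fin, Fintype.card_prod,
    smul_add, Finset.smul_sum, Finset.sum_Ico_eq_sum_range, Finset.sum_range, ← htop]
  rw [Finset.sum_comm, ← Nat.cast_smul_eq_nsmul ℝ≥0∞, smul_smul,
    show (((K - K₀ + 1) * B : ℕ) : ℝ≥0∞) = B * ((K - K₀ + 1 : ℕ) : ℝ≥0∞) by push_cast; ring]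

theorem repeated_subsampling_coverage_lower_general
    {𝒳 𝒴 Ω₁ Ω₂ : Type*} [MeasurableSpace 𝒳] [MeasurableSpace 𝒴]
    [MeasurableSpace Ω₁] [MeasurableSpace Ω₂]
    (P₁ : Measure Ω₁) [IsProbabilityMeasure P₁]
    (P₂ : Measure Ω₂) [IsProbabilityMeasure P₂]
    (K K₀ B : ℕ) (hK₀ : K₀ ≤ K) (hB : 0 < B)
    (N : ℕ → Ω₁ → ℕ) (Z : ℕ → ℕ → Ω₁ → 𝒳 × 𝒴)
    (hN : ∀ k ω, 1 ≤ N k ω)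
    (hNmeas : ∀ k, Measurable (N k)) (hZmeas : ∀ k i, Measurable (Z k i))
    (hexch : HierExch (K + 1) P₁ N Z)
    (U : ℕ → ℕ → Ω₂ → ℝ) (hUmeas : ∀ k b, Measurable (U k b))
    (hU : Measure.map
        (fun ω₂ => fun p : Fin (K - K₀) × Fin B => U (K₀ + p.1.1) p.2.1 ω₂) P₂
      = Measure.pi fun _ : Fin (K - K₀) × Fin B =>
          (volume : Measure ℝ).restrict (Set.Ico (0 : ℝ) 1))
    (α : ℝ) (hα₀ : 0 < α)
    (A : (Fin K₀ → ℕ × (ℕ → 𝒳 × 𝒴)) → 𝒳 × 𝒴 → ℝ)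
    (hA : Measurable fun p : (Fin K₀ → ℕ × (ℕ → 𝒳 × 𝒴)) × (𝒳 × 𝒴) => A p.1 p.2) :
    ENNReal.ofReal (1 - α) ≤
      (P₁.prod P₂) {ω : Ω₁ × Ω₂ | (A (hierData K₀ N Z ω.1) (Z K 0 ω.1) : EReal)
          ≤ erealQuantile (1 - α)
              ((∑ b ∈ Finset.range B, ∑ k ∈ Finset.Ico K₀ K,
                  ((B : ℝ≥0∞) * ((K - K₀ + 1 : ℕ) : ℝ≥0∞))⁻¹
                    • Measure.dirac
                        ((A (hierData K₀ N Z ω.1)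
                            (Z k (Nat.floor (U k b ω.2 * (N k ω.1 : ℝ))) ω.1) : EReal)))
                + (((K - K₀ + 1 : ℕ) : ℝ≥0∞))⁻¹ • Measure.dirac (⊤ : EReal))} := by
  have hD : Measurable (hierData (K + 1) N Z) := measurable_hierData hNmeas hZmeas
  have hUcal : Measurable fun ω₂ (p : Fin (K - K₀) × Fin B) => U (K₀ + p.1.1) p.2.1 ω₂ :=
    measurable_pi_lambda _ fun _ => hUmeas _ _
  have : IsProbabilityMeasure (P₁.map (hierData (K + 1) N Z)) :=
    Measure.isProbabilityMeasure_map hD.aemeasurable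
  have : NeZero B := ⟨hB.ne'⟩
  have hN₀ : P₁.map (hierData (K + 1) N Z) {d | (d (Fin.last K)).1 = 0} = 0 := by
    rw [Measure.map_apply hD (measurableSet_groupSize_eq _ 0)]
    convert measure_empty (μ := P₁)
    ext ω
    simpa [hierData] using Nat.one_le_iff_ne_zero.1 (hN K ω)
  have hcov := RepeatedSubsampling.coverage_of_exchangeable (hK₀ := hK₀) (A := A) (B := B)
    (hexch.map_comp_perm hD) (fun _ σ => hexch.map_permWithin_restrict hD (Fin.last K) σ) hN₀ hA
    (β := 1 - α) (by linarith)
  rw [← hU, Measure.map_prod_map _ _ hD hUcal, Measure.map_apply (hD.prodMap hUcal)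
    (RepeatedSubsampling.measurableSet_testScore_le_threshold hA (by linarith))] at hcov
  refine hcov.trans_eq (congrArg _ ?_)
  ext ω
  simp only [mem_ofPred_eq, mem_preimage, sum_dirac_add_dirac_top_eq_empiricalMeasure]
  rfl

/-- **Proposition (Coverage of Repeated Subsampling, lower bound).**
Under hierarchical exchangeability, with subsampling indices `i_k^{(b)} = ⌊U_k^{(b)}·N_k⌋`
drawn (via an independent i.i.d. array of `Uniform[0,1)` variables) uniformly with
replacement from each calibration group, the Repeated Subsampling prediction set, whose
threshold is the `(1-α)`-quantile of
`Σ_b Σ_k (1/(B(K₁+1))) δ_{s(Z_{k,i_k^{(b)}})} + (1/(K₁+1)) δ_{+∞}`,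
covers the test response with probability at least `1 - α`. -/
theorem repeated_subsampling_coverage_lower
    {𝒳 𝒴 Ω₁ Ω₂ : Type*} [MeasurableSpace 𝒳] [MeasurableSpace 𝒴]
    [MeasurableSpace Ω₁] [MeasurableSpace Ω₂]
    (P₁ : Measure Ω₁) [IsProbabilityMeasure P₁]
    (P₂ : Measure Ω₂) [IsProbabilityMeasure P₂]
    (K K₀ B : ℕ) (hK₀ : K₀ ≤ K) (hB : 0 < B)
    (N : ℕ → Ω₁ → ℕ) (Z : ℕ → ℕ → Ω₁ → 𝒳 × 𝒴)
    (hN : ∀ k ω, 1 ≤ N k ω)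
    (hNmeas : ∀ k, Measurable (N k)) (hZmeas : ∀ k i, Measurable (Z k i))
    (hexch : HierExch (K + 1) P₁ N Z)
    (U : ℕ → ℕ → Ω₂ → ℝ) (hUmeas : ∀ k b, Measurable (U k b))
    (hU : Measure.map
        (fun ω₂ => fun p : Fin (K - K₀) × Fin B => U (K₀ + p.1.1) p.2.1 ω₂) P₂
      = Measure.pi fun _ : Fin (K - K₀) × Fin B =>
          (volume : Measure ℝ).restrict (Set.Ico (0 : ℝ) 1))
    (α : ℝ) (hα₀ : 0 < α) (hα₁ : α < 1)
    (A : (Fin K₀ → ℕ × (ℕ → 𝒳 × 𝒴)) → 𝒳 × 𝒴 → ℝ)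
    (hA : Measurable fun p : (Fin K₀ → ℕ × (ℕ → 𝒳 × 𝒴)) × (𝒳 × 𝒴) => A p.1 p.2) :
    ENNReal.ofReal (1 - α) ≤
      (P₁.prod P₂) {ω : Ω₁ × Ω₂ | (A (hierData K₀ N Z ω.1) (Z K 0 ω.1) : EReal)
          ≤ erealQuantile (1 - α)
              ((∑ b ∈ Finset.range B, ∑ k ∈ Finset.Ico K₀ K,
                  ((B : ℝ≥0∞) * ((K - K₀ + 1 : ℕ) : ℝ≥0∞))⁻¹
                    • Measure.dirac
                        ((A (hierData K₀ N Z ω.1)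
                            (Z k (Nat.floor (U k b ω.2 * (N k ω.1 : ℝ))) ω.1) : EReal)))
                + (((K - K₀ + 1 : ℕ) : ℝ≥0∞))⁻¹ • Measure.dirac (⊤ : EReal))} :=
  repeated_subsampling_coverage_lower_general P₁ P₂ K K₀ B hK₀ hB N Z hN hNmeas hZmeas hexch U
    hUmeas hU α hα₀ A hA
end
end

section
/- Weighted tournament lemma: Let I be a finite index set, let w : I → [0,∞) be weights with Σ_{p∈I} w_p = 1, and let A : I × I → {0,1} satisfy A(p,q) + A(q,p) ≤ 1 for all p,q ∈ I. For β ∈ (0,1), define S = { p ∈ I : Σ_{q∈I} w_q A(p,q) ≥ 1 − β }. Then Σ_{p∈S} w_p ≤ 2β. -/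
open MeasureTheory ProbabilityTheory
open scoped ENNReal

noncomputable section

/-- **Lemma (Weighted tournament bound).**
If `w` are nonnegative weights summing to one on a finite index set `I` and
`A : I × I → {0,1}` satisfies `A p q + A q p ≤ 1`, then any set `S` of indices `p` with
`Σ_q w q · A p q ≥ 1 - β` has total weight `Σ_{p ∈ S} w p ≤ 2β`. -/
theorem weighted_tournament {I : Type*} [Fintype I]
    (w : I → ℝ) (hw : ∀ p, 0 ≤ w p) (hsum : ∑ p, w p = 1)
    (A : I → I → ℝ) (hA01 : ∀ p q, A p q = 0 ∨ A p q = 1)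
    (hA : ∀ p q, A p q + A q p ≤ 1)
    (β : ℝ) (hβ₀ : 0 < β) (hβ₁ : β < 1)
    (S : Finset I) (hS : ∀ p ∈ S, 1 - β ≤ ∑ q, w q * A p q) :
    ∑ p ∈ S, w p ≤ 2 * β := by
  classical
  have hA0 : ∀ p q, 0 ≤ A p q := fun p q => by rcases hA01 p q with h|h <;> simp [h]
  have hA1 : ∀ p q, A p q ≤ 1 := fun p q => by rcases hA01 p q with h|h <;> simp [h]
  set W := ∑ p ∈ S, w p with hW
  have hWnn : 0 ≤ W := Finset.sum_nonneg fun p _ => hw p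
  have hW1 : W ≤ 1 := by
    rw [hW, ← hsum]
    exact Finset.sum_le_sum_of_subset_of_nonneg (Finset.subset_univ S) fun p _ _ => hw p
  set X := ∑ p ∈ S, ∑ q ∈ S, w p * w q * A p q with hX
  have hswap : X = ∑ p ∈ S, ∑ q ∈ S, w p * w q * A q p := by
    rw [hX, Finset.sum_comm]
    exact Finset.sum_congr rfl fun p _ => Finset.sum_congr rfl fun q _ => by ring
  have hupper : 2 * X ≤ W * W := by
    have h2 : 2 * X = ∑ p ∈ S, ∑ q ∈ S, w p * w q * (A p q + A q p) := by
      rw [two_mul]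
      nth_rewrite 2 [hswap]
      rw [← Finset.sum_add_distrib]
      exact Finset.sum_congr rfl fun p _ => by
        rw [← Finset.sum_add_distrib]
        exact Finset.sum_congr rfl fun q _ => by ring
    rw [h2, hW, Finset.sum_mul_sum]
    refine Finset.sum_le_sum fun p _ => Finset.sum_le_sum fun q _ => ?_
    have := hA p q
    nlinarith [mul_nonneg (hw p) (hw q)]
  have hcompl : ∑ q ∈ Sᶜ, w q = 1 - W := by
    have := Finset.sum_add_sum_compl S w
    rw [hsum] at this; linarith
  have hinner : ∀ p ∈ S, W - β ≤ ∑ q ∈ S, w q * A p q := by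
    intro p hp
    have hsplit : (∑ q ∈ S, w q * A p q) + ∑ q ∈ Sᶜ, w q * A p q = ∑ q, w q * A p q :=
      Finset.sum_add_sum_compl S _
    have hub : ∑ q ∈ Sᶜ, w q * A p q ≤ 1 - W := by
      rw [← hcompl]
      exact Finset.sum_le_sum fun q _ => by
        nlinarith [hw q, hA1 p q, hA0 p q]
    have := hS p hp
    linarith
  have hlower : W * (W - β) ≤ X := by
    rw [hX, hW, Finset.sum_mul]
    refine Finset.sum_le_sum fun p hp => ?_
    have h1 : w p * (W - β) ≤ w p * ∑ q ∈ S, w q * A p q :=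
      mul_le_mul_of_nonneg_left (hinner p hp) (hw p)
    calc w p * (W - β) ≤ w p * ∑ q ∈ S, w q * A p q := h1
      _ = ∑ q ∈ S, w p * w q * A p q := by rw [Finset.mul_sum]; exact Finset.sum_congr rfl fun q _ => by ring
  nlinarith [hWnn, hβ₀]
end
end
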